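/- Progress for the source language: if the runtime state ⟨X, ρ, e⟩ is well typed (N | Γ ⊢_D ⟨X, ρ, e⟩), then either e is a tuple of variables (x₁,…,xₙ), or there exists ⟨X′, ρ′, e′⟩ with ⟨X, ρ, e⟩ →_D ⟨X′, ρ′, e′⟩. -/
import Mathlib


/-! Formalization of the source language of the type-based qubit-allocation framework.
The only simple type is `qbit`, so a tuple type is identified with its arity and a
typing context with the finite set of its (qubit) variables. -/

/-- A function type `τ₁ * ⋯ * τ_args →[uses] τ₁ * ⋯ * τ_ret`. -/
structure FunTy where
  args : ℕ
  uses : ℕ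
  ret : ℕ
deriving DecidableEq

/-- A function type environment Θ. -/
abbrev FunEnv := String → Option FunTy

/-- A linear typing context Γ (all variables have type `qbit`). -/
abbrev Ctx := Finset String

/-- Expressions of the source language. -/
inductive Expr : Type
  | ret (xs : List String)
  | init (x : String) (e : Expr)
  | discard (x : String) (e : Expr)
  | cnot (x₁ x₂ y₁ y₂ : String) (e : Expr)
  | call (xs : List String) (f : String) (ys : List String) (e : Expr)
  | letTup (xs : List String) (e₁ e₂ : Expr)
  | ite (x : String) (e₁ e₂ : Expr)

/-- Simultaneous renaming of all variable occurrences in an expression. -/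
def Expr.rename (σ : String → String) : Expr → Expr
  | .ret xs => .ret (xs.map σ)
  | .init x e => .init (σ x) (e.rename σ)
  | .discard x e => .discard (σ x) (e.rename σ)
  | .cnot x₁ x₂ y₁ y₂ e => .cnot (σ x₁) (σ x₂) (σ y₁) (σ y₂) (e.rename σ)
  | .call xs f ys e => .call (xs.map σ) f (ys.map σ) (e.rename σ)
  | .letTup xs e₁ e₂ => .letTup (xs.map σ) (e₁.rename σ) (e₂.rename σ)
  | .ite x e₁ e₂ => .ite (σ x) (e₁.rename σ) (e₂.rename σ)

/-- The simultaneous substitution `[y₁/x₁, …, yₙ/xₙ]` as a map on variables. -/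
def listSubst (xs ys : List String) (v : String) : String :=
  ((xs.zip ys).lookup v).getD v

/-- The typing judgment `Θ | N | Γ ⊢ e : T` of the source language, where `N` is the
number of free qubits and `T` is the arity of the returned tuple of qubits. -/
inductive HasTy (Θ : FunEnv) : ℕ → Ctx → Expr → ℕ → Prop
  | ret (N : ℕ) (xs : List String) (hnd : xs.Nodup) :
      HasTy Θ N xs.toFinset (.ret xs) xs.length
  | init (x : String) (Γ : Ctx) (N T : ℕ) (e : Expr)
      (hx : x ∉ Γ) (hN : 1 ≤ N)
      (h : HasTy Θ (N - 1) (insert x Γ) e T) :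
      HasTy Θ N Γ (.init x e) T
  | discard (x : String) (Γ : Ctx) (N T : ℕ) (e : Expr)
      (hx : x ∉ Γ)
      (h : HasTy Θ (N + 1) Γ e T) :
      HasTy Θ N (insert x Γ) (.discard x e) T
  | letTup (xs : List String) (e₁ e₂ : Expr) (Γ₁ Γ₂ : Ctx) (N T : ℕ)
      (hdisj : Disjoint Γ₁ Γ₂) (hnd : xs.Nodup)
      (hxs : ∀ x ∈ xs, x ∉ Γ₂)
      (h₁ : HasTy Θ N Γ₁ e₁ xs.length)
      (h₂ : HasTy Θ (N + Γ₁.card - xs.length) (Γ₂ ∪ xs.toFinset) e₂ T) :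
      HasTy Θ N (Γ₁ ∪ Γ₂) (.letTup xs e₁ e₂) T
  | cnot (x₁ x₂ y₁ y₂ : String) (Γ : Ctx) (N T : ℕ) (e : Expr)
      (hx₁ : x₁ ∉ Γ) (hx₂ : x₂ ∉ Γ) (hx : x₁ ≠ x₂)
      (hy₁ : y₁ ∉ Γ) (hy₂ : y₂ ∉ Γ) (hy : y₁ ≠ y₂)
      (h : HasTy Θ N (insert x₁ (insert x₂ Γ)) e T) :
      HasTy Θ N (insert y₁ (insert y₂ Γ)) (.cnot x₁ x₂ y₁ y₂ e) T
  | ite (x : String) (Γ : Ctx) (N T : ℕ) (e₁ e₂ : Expr)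
      (hx : x ∈ Γ)
      (h₁ : HasTy Θ N Γ e₁ T) (h₂ : HasTy Θ N Γ e₂ T) :
      HasTy Θ N Γ (.ite x e₁ e₂) T
  | call (xs : List String) (f : String) (ys : List String) (e : Expr)
      (Γ : Ctx) (N T : ℕ) (θ : FunTy)
      (hf : Θ f = some θ) (hargs : ys.length = θ.args) (hret : xs.length = θ.ret)
      (hndx : xs.Nodup) (hndy : ys.Nodup)
      (hxs : ∀ x ∈ xs, x ∉ Γ) (hys : ∀ y ∈ ys, y ∉ Γ)
      (hN : θ.uses ≤ N)
      (h : HasTy Θ (N - xs.length + ys.length) (Γ ∪ xs.toFinset) e T) :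
      HasTy Θ N (Γ ∪ ys.toFinset) (.call xs f ys e) T

/-! Operational semantics. The density operator is represented concretely as a matrix
indexed by classical configurations of a fixed set `s` of qubit labels (`s = Var(ρ)`,
which is invariant under reduction). -/

/-- Density matrices labeled by the qubit variables in `s`. -/
abbrev QMat (s : Finset String) := Matrix ({x // x ∈ s} → Fin 2) ({x // x ∈ s} → Fin 2) ℂ

/-- The reset map `ρ ↦ Σ_b |0⟩⟨b|_x ρ |b⟩⟨0|_x` on qubit `x`. -/
noncomputable def resetAt {s : Finset String} (x : {y // y ∈ s}) (ρ : QMat s) : QMat s :=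
  fun i j =>
    if i x = 0 ∧ j x = 0 then
      ∑ b : Fin 2, ρ (Function.update i x b) (Function.update j x b)
    else 0

/-- The action of CNOT (control `y₁`, target `y₂`) on a basis configuration. -/
def cnotBasis {s : Finset String} (y₁ y₂ : {y // y ∈ s}) (i : {y // y ∈ s} → Fin 2) :
    {y // y ∈ s} → Fin 2 :=
  Function.update i y₂ (i y₁ + i y₂)

/-- Conjugation of `ρ` by the CNOT gate on qubits `y₁, y₂`: `ρ ↦ U ρ U†`. -/
def cnotAt {s : Finset String} (y₁ y₂ : {y // y ∈ s}) (ρ : QMat s) : QMat s :=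
  fun i j => ρ (cnotBasis y₁ y₂ i) (cnotBasis y₁ y₂ j)

/-- The z-basis measurement branch `ρ ↦ M_b ρ M_b†` on qubit `x`. -/
def measAt {s : Finset String} (x : {y // y ∈ s}) (b : Fin 2) (ρ : QMat s) : QMat s :=
  fun i j => if i x = b ∧ j x = b then ρ i j else 0

/-- Function definitions `f ↦ (x₁,…,xₘ) e`. -/
abbrev Decls := List (String × List String × Expr)

/-- The reduction relation `⟨X, ρ, e⟩ →_D ⟨X′, ρ′, e′⟩` of the source language. -/
inductive Step (D : Decls) {s : Finset String} :
    Finset String × QMat s × Expr → Finset String × QMat s × Expr → Prop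
  | let1 (X : Finset String) (ρ : QMat s) (xs ys : List String) (e : Expr)
      (hlen : xs.length = ys.length) :
      Step D (X, ρ, .letTup xs (.ret ys) e) (X, ρ, e.rename (listSubst xs ys))
  | let2 (X X' : Finset String) (ρ ρ' : QMat s) (xs : List String) (e₁ e₁' e₂ : Expr)
      (h : Step D (X, ρ, e₁) (X', ρ', e₁')) :
      Step D (X, ρ, .letTup xs e₁ e₂) (X', ρ', .letTup xs e₁' e₂)
  | init (X : Finset String) (ρ : QMat s) (x x' : String) (e : Expr) (hx' : x' ∈ X) :
      Step D (X, ρ, .init x e) (X.erase x', ρ, e.rename (listSubst [x] [x']))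
  | discard (X : Finset String) (ρ : QMat s) (x : String) (e : Expr) (hx : x ∈ s) :
      Step D (X, ρ, .discard x e) (insert x X, resetAt ⟨x, hx⟩ ρ, e)
  | cnot (X : Finset String) (ρ : QMat s) (x₁ x₂ y₁ y₂ : String) (e : Expr)
      (h₁ : y₁ ∈ s) (h₂ : y₂ ∈ s) :
      Step D (X, ρ, .cnot x₁ x₂ y₁ y₂ e)
        (X, cnotAt ⟨y₁, h₁⟩ ⟨y₂, h₂⟩ ρ, e.rename (listSubst [x₁, x₂] [y₁, y₂]))
  | call (X : Finset String) (ρ : QMat s) (xs : List String) (f : String)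
      (ys ys' : List String) (e' e : Expr) (hf : (f, ys', e') ∈ D) :
      Step D (X, ρ, .call xs f ys e)
        (X, ρ, .letTup xs (e'.rename (listSubst ys' ys)) e)
  | ifTrue (X : Finset String) (ρ : QMat s) (x : String) (e₁ e₂ : Expr) (hx : x ∈ s) :
      Step D (X, ρ, .ite x e₁ e₂) (X, measAt ⟨x, hx⟩ 1 ρ, e₁)
  | ifFalse (X : Finset String) (ρ : QMat s) (x : String) (e₁ e₂ : Expr) (hx : x ∈ s) :
      Step D (X, ρ, .ite x e₁ e₂) (X, measAt ⟨x, hx⟩ 0 ρ, e₂)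

/-- Well-typed function definitions `Θ ⊢ D` (rules T-Empty, T-FunDecl, T-FunDef):
definitions are checked in order, each body may use previously defined functions and
the function itself recursively. -/
inductive WTDecls : FunEnv → Decls → Prop
  | nil : WTDecls (fun _ => none) []
  | cons (Θ : FunEnv) (D : Decls) (f : String) (xs : List String) (e : Expr) (N T : ℕ)
      (hD : WTDecls Θ D) (hf : Θ f = none) (hnd : xs.Nodup)
      (he : HasTy (Function.update Θ f (some ⟨xs.length, N, T⟩)) N xs.toFinset e T) :
      WTDecls (Function.update Θ f (some ⟨xs.length, N, T⟩)) (D ++ [(f, xs, e)])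

/-- Well-typed runtime states `N | Γ ⊢_D ⟨X, ρ, e⟩`: the declarations and the expression
are well typed, `|X| ≥ N`, `dom Γ ∩ X = ∅`, and `dom Γ ⊎ X ⊆ Var(ρ) = s`. -/
def WTState (D : Decls) {s : Finset String} (N : ℕ) (Γ : Ctx)
    (c : Finset String × QMat s × Expr) : Prop :=
  ∃ Θ T, WTDecls Θ D ∧ HasTy Θ N Γ c.2.2 T ∧
    N ≤ c.1.card ∧ Disjoint Γ c.1 ∧ Γ ∪ c.1 ⊆ s


theorem decl_lookup {Θ : FunEnv} {D : Decls} (h : WTDecls Θ D) :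
    ∀ f θ, Θ f = some θ → ∃ xs e, (f, xs, e) ∈ D := by
  induction h with
  | nil => intro f θ h; simp at h
  | cons Θ D f xs e N T hD hf hnd he ih =>
    intro g θ hg
    by_cases hfg : g = f
    · subst hfg; exact ⟨xs, e, by simp⟩
    · rw [Function.update_of_ne hfg] at hg
      obtain ⟨xs', e', hm⟩ := ih g θ hg
      exact ⟨xs', e', List.mem_append_left _ hm⟩

theorem ret_length {Θ : FunEnv} {N : ℕ} {Γ : Ctx} {ys : List String} {T : ℕ}
    (h : HasTy Θ N Γ (.ret ys) T) : T = ys.length := by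
  cases h; rfl

theorem progress_aux {s : Finset String} {Θ : FunEnv} {D : Decls} {N : ℕ} {Γ : Ctx}
    {e : Expr} {T : ℕ} (ht : HasTy Θ N Γ e T) (hD : WTDecls Θ D) :
    ∀ (X : Finset String) (ρ : QMat s), N ≤ X.card → Γ ∪ X ⊆ s →
      (∃ xs, e = Expr.ret xs) ∨ ∃ c', Step D (X, ρ, e) c' := by
  induction ht with
  | ret N xs hnd => intro X ρ _ _; exact Or.inl ⟨xs, rfl⟩
  | init x Γ N T e hx hN h ih =>
    intro X ρ hcard _
    have hpos : 0 < X.card := lt_of_lt_of_le hN hcard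
    obtain ⟨x', hx'⟩ := Finset.card_pos.mp hpos
    exact Or.inr ⟨_, Step.init X ρ x x' e hx'⟩
  | discard x Γ N T e hx h ih =>
    intro X ρ _ hsub
    have hxs : x ∈ s := hsub (Finset.mem_union_left _ (Finset.mem_insert_self x Γ))
    exact Or.inr ⟨_, Step.discard X ρ x e hxs⟩
  | letTup xs e₁ e₂ Γ₁ Γ₂ N T hdisj hnd hxs h₁ h₂ ih₁ ih₂ =>
    intro X ρ hcard hsub
    have hsub₁ : Γ₁ ∪ X ⊆ s := by
      intro y hy
      rcases Finset.mem_union.mp hy with hy | hy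
      · exact hsub (Finset.mem_union_left _ (Finset.mem_union_left _ hy))
      · exact hsub (Finset.mem_union_right _ hy)
    rcases ih₁ X ρ hcard hsub₁ with ⟨ys, rfl⟩ | ⟨c', hc'⟩
    · exact Or.inr ⟨_, Step.let1 X ρ xs ys e₂ (ret_length h₁)⟩
    · exact Or.inr ⟨_, Step.let2 _ _ _ _ _ _ _ _ hc'⟩
  | cnot x₁ x₂ y₁ y₂ Γ N T e hx₁ hx₂ hx hy₁ hy₂ hy h ih =>
    intro X ρ _ hsub
    have h₁ : y₁ ∈ s := hsub (Finset.mem_union_left _ (Finset.mem_insert_self _ _))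
    have h₂ : y₂ ∈ s := hsub (Finset.mem_union_left _
      (Finset.mem_insert_of_mem (Finset.mem_insert_self _ _)))
    exact Or.inr ⟨_, Step.cnot X ρ x₁ x₂ y₁ y₂ e h₁ h₂⟩
  | ite x Γ N T e₁ e₂ hx h₁ h₂ ih₁ ih₂ =>
    intro X ρ _ hsub
    have hxs : x ∈ s := hsub (Finset.mem_union_left _ hx)
    exact Or.inr ⟨_, Step.ifTrue X ρ x e₁ e₂ hxs⟩
  | call xs f ys e Γ N T θ hf hargs hret hndx hndy hxs hys hN h ih =>
    intro X ρ _ _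
    obtain ⟨ys', e', hm⟩ := decl_lookup hD f θ hf
    exact Or.inr ⟨_, Step.call X ρ xs f ys ys' e' e hm⟩

/-- Progress for the source language: a well-typed runtime state is either a returned
tuple of variables or can take a reduction step. -/
theorem progress {s : Finset String} (D : Decls) (N : ℕ) (Γ : Ctx)
    (c : Finset String × QMat s × Expr) (h : WTState D N Γ c) :
    (∃ xs, c.2.2 = Expr.ret xs) ∨ ∃ c', Step D c c' := by
  obtain ⟨Θ, T, hD, ht, hcard, hdisj, hsub⟩ := h
  obtain ⟨X, ρ, e⟩ := c
  exact progress_aux ht hD X ρ hcard hsub
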